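/- arXiv:1605.02171 — 7 statements merged into one kernel-verified Lean document; each statement's English description precedes it below -/
import Mathlib

section
/- Let A and B be complex numbers such that \mathrm{Re}\{A e^{it} + B e^{3it}\} \leq 1 for every real t. Then |A| \leq 2/\sqrt{3}. -/
/-!
Adding the hypothesis at `t = s - π/6` and `t = s + π/6` cancels the `B`-terms, because
`2 cos (π/2) = 0`, and leaves `Re (√3 A e^{is}) ≤ 2` for every `s`, as `2 cos (π/6) = √3`.
Taking `s = -arg A` makes `√3 A e^{is} = √3 ‖A‖`.
-/

open Complex

theorem Complex.exp_sub_mul_I_add_exp_add_mul_I (z w : ℂ) :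
    exp ((z - w) * I) + exp ((z + w) * I) = 2 * cos w * exp (z * I) := by
  rw [two_cos, add_mul (exp _), ← exp_add, ← exp_add]
  ring_nf

theorem Complex.norm_le_of_forall_re_mul_exp_mul_I_le {C : ℂ} {M : ℝ}
    (h : ∀ t : ℝ, (C * exp (t * I)).re ≤ M) : ‖C‖ ≤ M := by
  have hC : C * exp (-(arg C : ℂ) * I) = ‖C‖ := by
    nth_rewrite 1 [← norm_mul_exp_arg_mul_I C]
    rw [mul_assoc, ← exp_add, ← add_mul, add_neg_cancel, zero_mul, exp_zero, mul_one]
  simpa only [ofReal_neg, hC, ofReal_re] using h (-arg C)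

theorem mul_exp_add_mul_exp_three_at_sub_add_pi_div_six (A B : ℂ) (s : ℝ) :
    (A * exp (↑(s - Real.pi / 6) * I) + B * exp (3 * ↑(s - Real.pi / 6) * I)) +
      (A * exp (↑(s + Real.pi / 6) * I) + B * exp (3 * ↑(s + Real.pi / 6) * I)) =
      Real.sqrt 3 * A * exp (s * I) := by
  have hA := exp_sub_mul_I_add_exp_add_mul_I s ↑(Real.pi / 6)
  have hB := exp_sub_mul_I_add_exp_add_mul_I (3 * s) ↑(Real.pi / 2)
  rw [← ofReal_cos, Real.cos_pi_div_six] at hA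
  rw [← ofReal_cos, Real.cos_pi_div_two] at hB
  push_cast at hA hB ⊢
  ring_nf at hA hB ⊢
  linear_combination A * hA + B * hB

/-- If `Re (A e^{it} + B e^{3it}) ≤ 1` for every real `t`, then
`|A| ≤ 2/√3`. -/
theorem coeff_bound_of_trig_ineq (A B : ℂ)
    (hAB : ∀ t : ℝ,
      (A * Complex.exp (t * Complex.I) + B * Complex.exp (3 * t * Complex.I)).re ≤ 1) :
    ‖A‖ ≤ 2 / Real.sqrt 3 := by
  have hsqrt3 : (0 : ℝ) < Real.sqrt 3 := by positivity
  have hre : ∀ s : ℝ, (Real.sqrt 3 * A * exp (s * I)).re ≤ 2 := fun s => by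
    rw [← mul_exp_add_mul_exp_three_at_sub_add_pi_div_six A B s, add_re]
    linarith [hAB (s - Real.pi / 6), hAB (s + Real.pi / 6)]
  have hnorm := norm_le_of_forall_re_mul_exp_mul_I_le hre
  rw [norm_mul, norm_real, Real.norm_of_nonneg hsqrt3.le] at hnorm
  rw [le_div_iff₀ hsqrt3]
  linarith
end

section
/- For every f \in \mathcal{AK}^0_H, the range f(\mathbb{D}) contains the open disk \{w \in \mathbb{C} : |w| < \sqrt{3}/(\sqrt{3}+4)\}. -/
/-!
The image `Ω = f(𝔻)` is open, since a sense-preserving `f` is a local homeomorphism, and convex,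
being an increasing union of the convex sets `f(𝔻(0,r))`, `r < 1`. If `w ∉ Ω`, some functional
`Re (c ·)` separates `w` from `Ω`. Then `ψ = c h + c̄ g` is holomorphic with `ψ(0) = 0`,
`ψ'(0) = c` and `Re ψ < M := Re (c w)` on `𝔻`, so the Schwarz lemma applied to `ψ / (2M - ψ)`
gives `|c| ≤ 2M ≤ 2|c||w|`. Hence `|w| ≥ 1/2 > √3/(√3+4)`.
-/

open Complex Metric ComplexConjugate Filter Topology Set

theorem convex_image_ball_of_forall_lt {X F : Type*} [MetricSpace X] [ProperSpace X]
    [AddCommGroup F] [Module ℝ F] {f : X → F} {x : X} {R : ℝ}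
    (h : ∀ r, 0 < r → r < R → Convex ℝ (f '' ball x r)) : Convex ℝ (f '' ball x R) := by
  rintro _ ⟨p, hp, rfl⟩ _ ⟨q, hq, rfl⟩ a b ha hb hab
  obtain ⟨r, hrR, hpq⟩ := exists_lt_subset_ball (Set.toFinite {p, q}).isClosed
    (insert_subset_iff.2 ⟨hp, singleton_subset_iff.2 hq⟩)
  have hp' : p ∈ ball x r := hpq (mem_insert p _)
  have hq' : q ∈ ball x r := hpq (mem_insert_of_mem p rfl)
  have hr : 0 < r := dist_nonneg.trans_lt hp'
  exact image_mono (ball_subset_ball hrR.le)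
    (h r hr hrR (mem_image_of_mem f hp') (mem_image_of_mem f hq') ha hb hab)

theorem IsOpen.image_of_map_nhds_eq {X Y : Type*} [TopologicalSpace X] [TopologicalSpace Y]
    {f : X → Y} {U : Set X} (hU : IsOpen U) (hf : ∀ z ∈ U, map f (𝓝 z) = 𝓝 (f z)) :
    IsOpen (f '' U) := by
  rw [isOpen_iff_mem_nhds]
  rintro _ ⟨z, hz, rfl⟩
  rw [← hf z hz]
  exact image_mem_map (hU.mem_nhds hz)

theorem map_nhds_add_conj_eq {h g : ℂ → ℂ} {h' g' z : ℂ} (hh : HasStrictDerivAt h h' z)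
    (hg : HasStrictDerivAt g g' z) (hlt : ‖g'‖ < ‖h'‖) :
    map (fun z => h z + conj (g z)) (𝓝 z) = 𝓝 (h z + conj (g z)) := by
  have hf := (hh.hasStrictFDerivAt.restrictScalars ℝ).add
    (conjCLE.toContinuousLinearMap.hasStrictFDerivAt.comp z
      (hg.hasStrictFDerivAt.restrictScalars ℝ))
  refine hf.map_nhds_eq_of_surj (LinearMap.range_eq_top.2 ?_)
  refine LinearMap.injective_iff_surjective.1 ((injective_iff_map_eq_zero _).2 fun v hv => ?_)
  simp only [ContinuousLinearMap.toLinearMap_add, ContinuousLinearMap.coe_restrictScalars,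
    ContinuousLinearMap.toLinearMap_toSpanSingleton, ContinuousLinearMap.toLinearMap_comp,
    ContinuousLinearEquiv.toLinearMap_toContinuousLinearMap, conjCLE_toLinearEquiv,
    LinearMap.add_apply, LinearMap.coe_restrictScalars, LinearMap.toSpanSingleton_apply,
    smul_eq_mul, LinearMap.coe_comp, LinearEquiv.coe_coe, AlgEquiv.coe_toLinearEquiv, conjAe_coe,
    Function.comp_apply, map_mul] at hv
  by_contra hv0
  have hnorm : ‖v‖ * ‖h'‖ = ‖v‖ * ‖g'‖ := by
    simpa [norm_mul] using congrArg norm (eq_neg_of_add_eq_zero_left hv)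
  exact hlt.ne' (mul_left_cancel₀ (norm_ne_zero_iff.2 hv0) hnorm)

theorem exists_re_mul_lt_of_convex_of_isOpen {S : Set ℂ} (hconv : Convex ℝ S) (hopen : IsOpen S)
    {w : ℂ} (hw : w ∉ S) : ∃ c : ℂ, ∀ s ∈ S, (c * s).re < (c * w).re := by
  obtain ⟨ℓ, hℓ⟩ := geometric_hahn_banach_open_point hconv hopen hw
  refine ⟨conj ((InnerProductSpace.toDual ℝ ℂ).symm ℓ), fun s hs => ?_⟩
  have hre : ∀ u, (conj ((InnerProductSpace.toDual ℝ ℂ).symm ℓ) * u).re = ℓ u := fun u => by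
    rw [← InnerProductSpace.toDual_symm_apply, Complex.inner, mul_comm]
  simpa only [hre] using hℓ s hs

theorem norm_lt_norm_two_mul_sub_of_re_lt {z : ℂ} {M : ℝ} (hM : 0 < M) (hz : z.re < M) :
    ‖z‖ < ‖2 * M - z‖ := by
  rw [← sq_lt_sq₀ (norm_nonneg _) (norm_nonneg _), ← normSq_eq_norm_sq, ← normSq_eq_norm_sq]
  simp only [normSq_apply, sub_re, sub_im, mul_re, mul_im, ofReal_re, ofReal_im]
  norm_num
  nlinarith

theorem norm_deriv_le_of_re_lt {ψ : ℂ → ℂ} {c : ℂ} {R M : ℝ} (hψ : DifferentiableOn ℂ ψ (ball c R))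
    (hR : 0 < R) (hc : ψ c = 0) (hre : ∀ z ∈ ball c R, (ψ z).re < M) :
    ‖deriv ψ c‖ ≤ 2 * M / R := by
  have hM : 0 < M := by simpa [hc] using hre c (mem_ball_self hR)
  have hlt : ∀ z ∈ ball c R, ‖ψ z‖ < ‖2 * M - ψ z‖ := fun z hz =>
    norm_lt_norm_two_mul_sub_of_re_lt hM (hre z hz)
  have hden : ∀ z ∈ ball c R, (2 * M - ψ z : ℂ) ≠ 0 := fun z hz =>
    norm_pos_iff.1 ((norm_nonneg _).trans_lt (hlt z hz))
  set F : ℂ → ℂ := fun z => ψ z / (2 * M - ψ z)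
  have hF : DifferentiableOn ℂ F (ball c R) :=
    hψ.div ((differentiableOn_const _).sub hψ) hden
  have hmaps : MapsTo F (ball c R) (closedBall (F c) 1) := fun z hz => by
    rw [mem_closedBall, show F c = 0 by simp [F, hc], dist_zero_right, norm_div]
    exact div_le_one_of_le₀ (hlt z hz).le (norm_nonneg _)
  have hψ' : HasDerivAt ψ (deriv ψ c) c :=
    (hψ.differentiableAt (ball_mem_nhds c hR)).hasDerivAt
  have hF' : deriv F c = deriv ψ c / (2 * M) := by
    refine (hψ'.div (hψ'.const_sub _) (hden c (mem_ball_self hR))).deriv.trans ?_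
    have hM0 : (M : ℂ) ≠ 0 := ofReal_ne_zero.2 hM.ne'
    rw [hc]
    field_simp
    ring
  have hM' : ‖(2 * M : ℂ)‖ = 2 * M := by
    rw [norm_mul, Complex.norm_two, norm_real, Real.norm_of_nonneg hM.le]
  have := norm_deriv_le_div_of_mapsTo_ball hF hmaps hR
  rw [hF', norm_div, hM', div_le_div_iff₀ (by positivity) hR] at this
  rw [le_div_iff₀ hR]
  linarith

theorem ball_half_subset_image_add_conj {h g : ℂ → ℂ} (hh : DifferentiableOn ℂ h (ball 0 1))
    (hg : DifferentiableOn ℂ g (ball 0 1)) (h0 : h 0 = 0) (g0 : g 0 = 0) (hd1 : deriv h 0 = 1)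
    (gd1 : deriv g 0 = 0) (hopen : IsOpen ((fun z => h z + conj (g z)) '' ball 0 1))
    (hconv : Convex ℝ ((fun z => h z + conj (g z)) '' ball 0 1)) :
    ball (0 : ℂ) (1 / 2) ⊆ (fun z => h z + conj (g z)) '' ball 0 1 := by
  intro w hw
  by_contra hwS
  obtain ⟨c, hc⟩ := exists_re_mul_lt_of_convex_of_isOpen hconv hopen hwS
  set ψ : ℂ → ℂ := fun z => c * h z + conj c * g z
  have hre : ∀ z ∈ ball 0 1, (ψ z).re < (c * w).re := fun z hz => by
    convert hc _ (mem_image_of_mem _ hz) using 1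
    simp only [ψ, add_re, mul_add, mul_re, conj_re, conj_im]
    ring
  have hψ : DifferentiableOn ℂ ψ (ball 0 1) := (hh.const_mul c).add (hg.const_mul (conj c))
  have hψ' : deriv ψ 0 = c := by
    have h0' := (hh.differentiableAt (ball_mem_nhds 0 one_pos)).hasDerivAt
    have g0' := (hg.differentiableAt (ball_mem_nhds 0 one_pos)).hasDerivAt
    rw [hd1] at h0'
    rw [gd1] at g0'
    exact ((h0'.const_mul c).add (g0'.const_mul (conj c))).deriv.trans (by simp)
  have hM : 0 < (c * w).re := by simpa [ψ, h0, g0] using hre 0 (mem_ball_self one_pos)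
  have hcM : ‖c‖ ≤ 2 * (c * w).re := by
    simpa [hψ'] using norm_deriv_le_of_re_lt hψ one_pos (by simp [ψ, h0, g0]) hre
  have hMc : (c * w).re ≤ ‖c‖ * ‖w‖ := (re_le_norm _).trans (norm_mul c w).le
  have hc0 : 0 < ‖c‖ := pos_of_mul_pos_left (hM.trans_le hMc) (norm_nonneg w)
  have := mul_lt_mul_of_pos_left (mem_ball_zero_iff.1 hw) hc0
  linarith

/-- Covering theorem: the range of every `f = h + conj g ∈ 𝒜𝒦⁰_H`
contains the open disk of radius `√3/(√3+4)` about the origin. -/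
theorem AK0_covering (h g : ℂ → ℂ)
    (hh : DifferentiableOn ℂ h (ball (0:ℂ) 1))
    (hg : DifferentiableOn ℂ g (ball (0:ℂ) 1))
    (hsp : ∀ z ∈ ball (0:ℂ) 1, ‖deriv g z‖ < ‖deriv h z‖)
    (h0 : h 0 = 0) (g0 : g 0 = 0) (hd1 : deriv h 0 = 1) (gd1 : deriv g 0 = 0)
    (hconv : ∀ a ∈ ball (0:ℂ) 1, ∀ r : ℝ, 0 < r → r < 1 - ‖a‖ →
        Convex ℝ ((fun z => h z + conj (g z)) '' ball a r)) :
    ball (0:ℂ) (Real.sqrt 3 / (Real.sqrt 3 + 4))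
      ⊆ (fun z => h z + conj (g z)) '' ball (0:ℂ) 1 := by
  have hopen : IsOpen ((fun z => h z + conj (g z)) '' ball (0:ℂ) 1) :=
    isOpen_ball.image_of_map_nhds_eq fun z hz => map_nhds_add_conj_eq
      (hh.analyticAt (isOpen_ball.mem_nhds hz)).hasStrictDerivAt
      (hg.analyticAt (isOpen_ball.mem_nhds hz)).hasStrictDerivAt (hsp z hz)
  have hconvex : Convex ℝ ((fun z => h z + conj (g z)) '' ball (0:ℂ) 1) :=
    convex_image_ball_of_forall_lt fun r hr hr1 =>
      hconv 0 (mem_ball_self one_pos) r hr (by simpa using hr1)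
  have hradius : Real.sqrt 3 / (Real.sqrt 3 + 4) ≤ 1 / 2 := by
    rw [div_le_div_iff₀ (by positivity) two_pos]
    nlinarith [Real.sqrt_nonneg 3, Real.sq_sqrt (show (0:ℝ) ≤ 3 by norm_num)]
  exact (ball_subset_ball hradius).trans
    (ball_half_subset_image_add_conj hh hg h0 g0 hd1 gd1 hopen hconvex)
end

section
/- Let f = h + \overline{g} be a sense-preserving harmonic function on \mathbb{D} with h(z) = z + \sum_{n=2}^{\infty} a_n z^n, g(z) = \sum_{n=2}^{\infty} b_n z^n (so g'(0) = 0), and suppose that \mathrm{Re}\, P(z,\zeta) \geq 0 for all z, \zeta \in \mathbb{D} with z \neq \zeta, where P(z,\zeta) = [(z-\zeta) h'(z) + (z-\zeta)^2 h''(z) + \overline{(z-\zeta) g'(z)} + \overline{(z-\zeta)^2 g''(z)}] / [(z-\zeta) h'(z) - \overline{(z-\zeta) g'(z)}]. Then |a_2| \leq 1/\sqrt{3}. -/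
open Complex Metric ComplexConjugate

noncomputable section

/-- If `f = h + conj g` is a sense-preserving normalized harmonic
function (`h(0) = g(0) = 0`, `h'(0) = 1`, `g'(0) = 0`) satisfying the uniform-convexity
condition `Re P(z,ζ) ≥ 0` for all `z ≠ ζ` in `𝔻`, then `|a₂| = |h''(0)/2| ≤ 1/√3`. -/
theorem UK0_second_coeff_bound (h g : ℂ → ℂ)
    (hh : DifferentiableOn ℂ h (ball (0:ℂ) 1))
    (hg : DifferentiableOn ℂ g (ball (0:ℂ) 1))
    (hsp : ∀ z ∈ ball (0:ℂ) 1, ‖deriv g z‖ < ‖deriv h z‖)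
    (h0 : h 0 = 0) (g0 : g 0 = 0) (hd1 : deriv h 0 = 1) (gd1 : deriv g 0 = 0)
    (hP : ∀ z ∈ ball (0:ℂ) 1, ∀ ζ ∈ ball (0:ℂ) 1, z ≠ ζ →
      0 ≤ (((z - ζ) * deriv h z + (z - ζ) ^ 2 * deriv (deriv h) z
            + conj ((z - ζ) * deriv g z) + conj ((z - ζ) ^ 2 * deriv (deriv g) z))
          / ((z - ζ) * deriv h z - conj ((z - ζ) * deriv g z))).re) :
    ‖deriv (deriv h) 0 / 2‖ ≤ 1 / Real.sqrt 3 := by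
  have h3pos : (0:ℝ) < Real.sqrt 3 := Real.sqrt_pos.mpr (by norm_num)
  set A := deriv (deriv h) 0 with hA
  set B := deriv (deriv g) 0 with hB
  by_cases hA0 : A = 0
  · rw [hA0]
    simp only [zero_div, norm_zero]
    positivity
  set s := Real.sqrt 3 with hs
  have hs2 : s ^ 2 = 3 := Real.sq_sqrt (by norm_num)
  have hs2c : ((s:ℂ)) ^ 2 = 3 := by
    rw [← Complex.ofReal_pow, hs2]; norm_num
  have hAn : (0:ℝ) < ‖A‖ := norm_pos_iff.mpr hA0
  have hAnc : ((‖A‖:ℝ) : ℂ) ≠ 0 := by exact_mod_cast hAn.ne'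
  set v : ℂ := conj A / (‖A‖ : ℂ) with hv
  have hvn : ‖v‖ = 1 := by
    rw [hv, norm_div, RCLike.norm_conj]
    simp only [Complex.norm_real, Real.norm_eq_abs, abs_of_pos hAn]
    rw [div_self hAn.ne']
  have hvne : v ≠ 0 := by
    intro hc; rw [hc] at hvn; simp at hvn
  set η : ℂ := ((s:ℂ) + I) / 2 with hη
  have hηconj : conj η = ((s:ℂ) - I) / 2 := by
    rw [hη, map_div₀, map_add, Complex.conj_ofReal, Complex.conj_I, map_ofNat]
    ring
  have hηmul : η * conj η = 1 := by
    rw [hηconj, hη]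
    have : ((s:ℂ) + I) * ((s:ℂ) - I) = 4 := by
      linear_combination hs2c - Complex.I_sq
    field_simp
    linear_combination this
  have hηn : ‖η‖ = 1 := by
    have h1 : (((‖η‖ : ℝ) : ℂ)) ^ 2 = 1 := by rw [← Complex.mul_conj']; exact hηmul
    have h2 : ‖η‖ ^ 2 = 1 := by exact_mod_cast h1
    nlinarith [norm_nonneg η]
  have hηne : η ≠ 0 := by
    intro hc; rw [hc] at hηn; simp at hηn
  have hvA : v * A = (‖A‖ : ℂ) := by
    rw [hv, div_mul_eq_mul_div, mul_comm, Complex.mul_conj', sq, mul_div_assoc,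
      div_self hAnc, mul_one]
  -- key simplification of P(0, ζ)
  have key : ∀ ζ : ℂ, ζ ≠ 0 →
      (((0 - ζ) * deriv h 0 + (0 - ζ) ^ 2 * deriv (deriv h) 0
            + conj ((0 - ζ) * deriv g 0) + conj ((0 - ζ) ^ 2 * deriv (deriv g) 0))
          / ((0 - ζ) * deriv h 0 - conj ((0 - ζ) * deriv g 0)))
        = 1 - ζ * A - (conj ζ) ^ 2 * conj B / ζ := by
    intro ζ hζ
    rw [hd1, gd1, ← hA, ← hB]
    simp only [mul_zero, mul_one, map_zero, map_mul, map_pow, map_sub, sub_zero, add_zero]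
    rw [div_eq_iff (sub_ne_zero.mpr (Ne.symm hζ))]
    field_simp [hζ]
    ring
  -- main inequality for each r ∈ (0,1)
  have main : ∀ r : ℝ, 0 < r → r < 1 → r * (s * ‖A‖) ≤ 2 := by
    intro r hr0 hr1
    set ζ₁ : ℂ := (r:ℂ) * η * v with hζ₁
    set ζ₂ : ℂ := (r:ℂ) * conj η * v with hζ₂
    have hrne : ((r:ℝ):ℂ) ≠ 0 := by exact_mod_cast hr0.ne'
    have hηcne : conj η ≠ 0 := by simpa using hηne
    have hζ₁ne : ζ₁ ≠ 0 := by
      rw [hζ₁]; exact mul_ne_zero (mul_ne_zero hrne hηne) hvne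
    have hζ₂ne : ζ₂ ≠ 0 := by
      rw [hζ₂]; exact mul_ne_zero (mul_ne_zero hrne hηcne) hvne
    have hζ₁m : ζ₁ ∈ ball (0:ℂ) 1 := by
      rw [mem_ball_zero_iff, hζ₁, norm_mul, norm_mul, hηn, hvn]
      simpa [abs_of_pos hr0] using hr1
    have hζ₂m : ζ₂ ∈ ball (0:ℂ) 1 := by
      rw [mem_ball_zero_iff, hζ₂, norm_mul, norm_mul, RCLike.norm_conj, hηn, hvn]
      simpa [abs_of_pos hr0] using hr1
    have h0m : (0:ℂ) ∈ ball (0:ℂ) 1 := mem_ball_self one_pos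
    have E₁ := hP 0 h0m ζ₁ hζ₁m (Ne.symm hζ₁ne)
    have E₂ := hP 0 h0m ζ₂ hζ₂m (Ne.symm hζ₂ne)
    rw [key ζ₁ hζ₁ne] at E₁
    rw [key ζ₂ hζ₂ne] at E₂
    -- the B-terms cancel
    have hT : (conj ζ₁) ^ 2 * conj B / ζ₁ + (conj ζ₂) ^ 2 * conj B / ζ₂ = 0 := by
      rw [div_add_div _ _ hζ₁ne hζ₂ne, div_eq_zero_iff]
      left
      rw [hζ₁, hζ₂]
      simp only [map_mul, Complex.conj_ofReal, Complex.conj_conj]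
      rw [hηconj, hη]
      linear_combination ((r:ℂ)^3 * conj B * (conj v)^2 * v * (s:ℂ) / 4) * hs2c
        + (3 * (r:ℂ)^3 * conj B * (conj v)^2 * v * (s:ℂ) / 4) * Complex.I_sq
    -- the A-terms sum
    have hS : ζ₁ * A + ζ₂ * A = ((r * (s * ‖A‖) : ℝ) : ℂ) := by
      rw [hζ₁, hζ₂]
      have e : ((r:ℂ) * η * v) * A + ((r:ℂ) * conj η * v) * A
          = (r:ℂ) * (η + conj η) * (v * A) := by ring
      rw [e, hvA, hηconj, hη]
      push_cast
      ring
    have hsum : (1 - ζ₁ * A - (conj ζ₁) ^ 2 * conj B / ζ₁).re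
        + (1 - ζ₂ * A - (conj ζ₂) ^ 2 * conj B / ζ₂).re
        = 2 - r * (s * ‖A‖) := by
      rw [← Complex.add_re]
      have e : (1 - ζ₁ * A - (conj ζ₁) ^ 2 * conj B / ζ₁)
          + (1 - ζ₂ * A - (conj ζ₂) ^ 2 * conj B / ζ₂)
          = 2 - (ζ₁ * A + ζ₂ * A) - ((conj ζ₁) ^ 2 * conj B / ζ₁ + (conj ζ₂) ^ 2 * conj B / ζ₂) := by
        ring
      rw [e, hT, hS, sub_zero]
      simp
    linarith [hsum ▸ add_nonneg E₁ E₂]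
  -- conclude s * ‖A‖ ≤ 2
  have hfin : s * ‖A‖ ≤ 2 := by
    by_contra hlt
    push_neg at hlt
    have hsA : 0 < s * ‖A‖ := lt_trans (by norm_num) hlt
    set r : ℝ := (2 / (s * ‖A‖) + 1) / 2 with hr
    have hq1 : 2 / (s * ‖A‖) < 1 := (div_lt_one hsA).mpr hlt
    have hq0 : 0 < 2 / (s * ‖A‖) := by positivity
    have h1 : 0 < r := by rw [hr]; linarith
    have h2 : r < 1 := by rw [hr]; linarith
    have h3 : 2 / (s * ‖A‖) < r := by rw [hr]; linarith
    have h4 : 2 < r * (s * ‖A‖) := (div_lt_iff₀ hsA).mp h3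
    linarith [main r h1 h2]
  have hnorm : ‖A / 2‖ = ‖A‖ / 2 := by
    rw [norm_div]
    norm_num
  rw [hnorm, div_le_div_iff₀ (by norm_num) h3pos]
  nlinarith [hfin]
end
end

section
/- Let f = h + \overline{g} with h(z) = z + \sum_{n=2}^{\infty} a_n z^n and g(z) = \sum_{n=1}^{\infty} b_n z^n holomorphic on \mathbb{D}, satisfying \sum_{n=2}^{\infty} n|a_n| + \sum_{n=1}^{\infty} n|b_n| \leq 1/2. Let a > -1 and b > -1 be real numbers satisfying either (i) ab \leq 3, or (ii) ab > 3 and a^2 b^2 - 4ab - 2(a+b) \leq 1. Define A_n = [(a+1)(b+1)/((a+n)(b+n))] a_n (with A_1 = a_1 = 1) and B_n = [(a+1)(b+1)/((a+n)(b+n))] b_n for n \geq 1. Then \sum_{n=2}^{\infty} n(2n-1)(|A_n| + |B_n|) \leq 1 - |B_1|; consequently the harmonic function F(z) = \sum_{n=1}^{\infty} A_n z^n + \overline{\sum_{n=1}^{\infty} B_n z^n} is uniformly convex in \mathbb{D}. -/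
open Complex Metric ComplexConjugate

noncomputable section

/-- The necessary and sufficient condition (due to Kanas–Ponnusamy–Sairam) for a
sense-preserving harmonic mapping `f = h + conj g` to be uniformly convex in the unit
disk: `Re P(z,ζ) ≥ 0` for all `z ≠ ζ` in `𝔻`.  We use it as our formal definition of
"uniformly convex in `𝔻`". -/
def UniformlyConvexOnDisk (h g : ℂ → ℂ) : Prop :=
  ∀ z ∈ ball (0:ℂ) 1, ∀ ζ ∈ ball (0:ℂ) 1, z ≠ ζ →
    0 ≤ (((z - ζ) * deriv h z + (z - ζ) ^ 2 * deriv (deriv h) z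
          + conj ((z - ζ) * deriv g z) + conj ((z - ζ) ^ 2 * deriv (deriv g) z))
        / ((z - ζ) * deriv h z - conj ((z - ζ) * deriv g z))).re

/-- The coefficient multipliers of the Bernardi-type transform `H_{a,b}`. -/
def bernCoeff (a b : ℝ) (c : ℕ → ℂ) : ℕ → ℂ :=
  fun n => (((a + 1) * (b + 1) / ((a + n) * (b + n)) : ℝ) : ℂ) * c n

/-!
For `n ≥ 2` the condition on `(a, b)` is exactly what makes
`(2n - 1)(a + 1)(b + 1) ≤ 2(a + n)(b + n)`, i.e. `n(2n - 1)|Aₙ| ≤ 2n|aₙ|`; summing gives the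
coefficient bound. Writing `n(2n - 1) = n + 2n(n - 1)`, that bound says that on the disk
`|G'| + 2(|H''| + |G''|) ≤ |H'|` for `F = H + conj G`. With `w = z - ζ`, so `|w| ≤ 2`, the
numerator `N` and denominator `D` of the quotient defining uniform convexity then satisfy
`|N - D| ≤ |N + D|`, which is `Re (N / D) ≥ 0`.
-/

open Topology

lemma Complex.re_div_nonneg_of_norm_sub_le_norm_add {N D : ℂ} (h : ‖N - D‖ ≤ ‖N + D‖) :
    0 ≤ (N / D).re := by
  have hre : 0 ≤ (N * conj D).re := by
    have hsq : normSq (N - D) ≤ normSq (N + D) := by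
      rw [normSq_eq_norm_sq, normSq_eq_norm_sq]
      exact pow_le_pow_left₀ (norm_nonneg _) h 2
    linarith [normSq_add N D, normSq_sub N D]
  rw [div_re, ← add_div]
  exact div_nonneg (by simpa [mul_re] using hre) (normSq_nonneg D)

lemma re_convexity_quotient_nonneg {w H₁ G₁ H₂ G₂ : ℂ} (hw : ‖w‖ ≤ 2)
    (h : ‖G₁‖ + 2 * (‖H₂‖ + ‖G₂‖) ≤ ‖H₁‖) :
    0 ≤ ((w * H₁ + w ^ 2 * H₂ + conj (w * G₁) + conj (w ^ 2 * G₂))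
      / (w * H₁ - conj (w * G₁))).re := by
  apply Complex.re_div_nonneg_of_norm_sub_le_norm_add
  set N := w * H₁ + w ^ 2 * H₂ + conj (w * G₁) + conj (w ^ 2 * G₂)
  set D := w * H₁ - conj (w * G₁)
  have hsub : ‖N - D‖ ≤ ‖w‖ ^ 2 * ‖H₂‖ + 2 * (‖w‖ * ‖G₁‖) + ‖w‖ ^ 2 * ‖G₂‖ := by
    calc ‖N - D‖ = ‖w ^ 2 * H₂ + 2 * conj (w * G₁) + conj (w ^ 2 * G₂)‖ := by
          congr 1; ring
      _ ≤ ‖w ^ 2 * H₂‖ + ‖2 * conj (w * G₁)‖ + ‖conj (w ^ 2 * G₂)‖ := norm_add₃_le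
      _ = _ := by simp
  have hadd : 2 * (‖w‖ * ‖H₁‖) - ‖w‖ ^ 2 * ‖H₂‖ - ‖w‖ ^ 2 * ‖G₂‖ ≤ ‖N + D‖ := by
    have : ‖2 * (w * H₁)‖ ≤ ‖N + D‖ + ‖w ^ 2 * H₂‖ + ‖conj (w ^ 2 * G₂)‖ :=
      calc ‖2 * (w * H₁)‖ = ‖N + D - w ^ 2 * H₂ - conj (w ^ 2 * G₂)‖ := by congr 1; ring
        _ ≤ _ := (norm_sub_le _ _).trans (add_le_add_left (norm_sub_le _ _) _)
    simp only [norm_mul, norm_pow, Complex.norm_ofNat, Complex.norm_conj] at this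
    linarith
  -- `‖N + D‖ - ‖N - D‖ ≥ 2‖w‖ (‖H₁‖ - ‖G₁‖ - ‖w‖ (‖H₂‖ + ‖G₂‖))`, and `‖w‖ ≤ 2`
  nlinarith [mul_nonneg (mul_nonneg (norm_nonneg w) (by linarith : (0:ℝ) ≤ 2 - ‖w‖))
      (add_nonneg (norm_nonneg H₂) (norm_nonneg G₂)),
    mul_nonneg (norm_nonneg w) (by linarith : (0:ℝ) ≤ ‖H₁‖ - ‖G₁‖ - 2 * (‖H₂‖ + ‖G₂‖))]

def derivCoeff (c : ℕ → ℂ) (n : ℕ) : ℂ := ((n + 1 : ℕ) : ℂ) * c (n + 1)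

lemma norm_derivCoeff (c : ℕ → ℂ) (n : ℕ) : ‖derivCoeff c n‖ = (n + 1) * ‖c (n + 1)‖ := by
  rw [derivCoeff, norm_mul, Complex.norm_natCast]
  push_cast
  ring

lemma derivCoeff_zero (c : ℕ → ℂ) : derivCoeff c 0 = c 1 := by
  simp [derivCoeff]

lemma norm_derivCoeff_succ_le (c : ℕ → ℂ) (n : ℕ) :
    ‖derivCoeff c (n + 1)‖ ≤ ‖derivCoeff (derivCoeff c) n‖ := by
  rw [norm_derivCoeff, norm_derivCoeff, norm_derivCoeff]
  push_cast
  have hn : (0 : ℝ) ≤ n := n.cast_nonneg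
  nlinarith [mul_nonneg (mul_nonneg hn (by positivity : (0 : ℝ) ≤ n + 1 + 1))
    (norm_nonneg (c (n + 1 + 1)))]

lemma norm_mul_pow_le_norm (d : ℂ) {z : ℂ} (hz : ‖z‖ ≤ 1) (n : ℕ) : ‖d * z ^ n‖ ≤ ‖d‖ := by
  rw [norm_mul, norm_pow]
  exact mul_le_of_le_one_right (norm_nonneg d) (pow_le_one₀ (norm_nonneg z) hz)

lemma hasDerivAt_tsum_mul_pow {c : ℕ → ℂ} (hc : Summable fun n => ‖derivCoeff c n‖) {z : ℂ}
    (hz : z ∈ ball (0 : ℂ) 1) :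
    HasDerivAt (fun w => ∑' n, c n * w ^ n) (∑' n, derivCoeff c n * z ^ n) z := by
  have hu : Summable fun n : ℕ => ‖(n : ℂ) * c n‖ :=
    (summable_nat_add_iff 1).mp (hc.congr fun n => by simp [derivCoeff])
  have hbound (n : ℕ) (y : ℂ) (hy : y ∈ ball (0 : ℂ) 1) :
      ‖(n : ℂ) * c n * y ^ (n - 1)‖ ≤ ‖(n : ℂ) * c n‖ :=
    norm_mul_pow_le_norm _ (mem_ball_zero_iff.1 hy).le _
  have hderiv := hasDerivAt_tsum_of_isPreconnected hu isOpen_ball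
    (convex_ball (0 : ℂ) 1).isPreconnected
    (g := fun n w => c n * w ^ n) (g' := fun n w => (n : ℂ) * c n * w ^ (n - 1))
    (fun n y _ => ((hasDerivAt_pow n y).const_mul (c n)).congr_deriv (by ring)) hbound
    (mem_ball_self one_pos) (summable_of_ne_finset_zero (s := {0}) fun n hn => by
      simp [zero_pow (Finset.notMem_singleton.1 hn)]) hz
  refine hderiv.congr_deriv ?_
  rw [(Summable.of_norm_bounded hu fun n => hbound n z hz).tsum_eq_zero_add]
  simp only [derivCoeff, Nat.cast_zero, zero_mul, zero_add, Nat.add_sub_cancel]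

lemma deriv_deriv_tsum_mul_pow {c : ℕ → ℂ} (hc : Summable fun n => ‖derivCoeff c n‖)
    (hc' : Summable fun n => ‖derivCoeff (derivCoeff c) n‖) {z : ℂ} (hz : z ∈ ball (0 : ℂ) 1) :
    deriv (deriv fun w => ∑' n, c n * w ^ n) z = ∑' n, derivCoeff (derivCoeff c) n * z ^ n := by
  have hderiv : deriv (fun w => ∑' n, c n * w ^ n) =ᶠ[𝓝 z]
      fun w => ∑' n, derivCoeff c n * w ^ n :=
    Filter.eventually_of_mem (isOpen_ball.mem_nhds hz) fun w hw =>
      (hasDerivAt_tsum_mul_pow hc hw).deriv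
  rw [hderiv.deriv_eq]
  exact (hasDerivAt_tsum_mul_pow hc' hz).deriv

lemma norm_tsum_mul_pow_le {d : ℕ → ℂ} (hd : Summable fun n => ‖d n‖) {z : ℂ} (hz : ‖z‖ ≤ 1) :
    ‖∑' n, d n * z ^ n‖ ≤ ∑' n, ‖d n‖ :=
  tsum_of_norm_bounded hd.hasSum fun n => norm_mul_pow_le_norm _ hz n

lemma norm_tsum_mul_pow_sub_le {d : ℕ → ℂ} (hd : Summable fun n => ‖d (n + 1)‖) {z : ℂ}
    (hz : ‖z‖ ≤ 1) : ‖∑' n, d n * z ^ n - d 0‖ ≤ ∑' n, ‖d (n + 1)‖ := by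
  have hs : Summable fun n => d n * z ^ n :=
    .of_norm_bounded ((summable_nat_add_iff 1 (f := fun n => ‖d n‖)).mp hd)
      fun n => norm_mul_pow_le_norm _ hz n
  rw [hs.tsum_eq_zero_add, pow_zero, mul_one, add_sub_cancel_left]
  exact tsum_of_norm_bounded hd.hasSum fun n => norm_mul_pow_le_norm _ hz _

lemma norm_deriv_tsum_mul_pow_sub_le {c : ℕ → ℂ}
    (hc : Summable fun n => ‖derivCoeff (derivCoeff c) n‖) {z : ℂ} (hz : z ∈ ball (0 : ℂ) 1) :
    ‖deriv (fun w => ∑' n, c n * w ^ n) z - c 1‖ ≤ ∑' n, ‖derivCoeff c (n + 1)‖ := by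
  have hc₁ : Summable fun n => ‖derivCoeff c (n + 1)‖ :=
    hc.of_nonneg_of_le (fun _ => norm_nonneg _) (norm_derivCoeff_succ_le c)
  rw [(hasDerivAt_tsum_mul_pow ((summable_nat_add_iff 1).mp hc₁) hz).deriv, ← derivCoeff_zero c]
  exact norm_tsum_mul_pow_sub_le hc₁ (mem_ball_zero_iff.1 hz).le

lemma norm_deriv_deriv_tsum_mul_pow_le {c : ℕ → ℂ}
    (hc : Summable fun n => ‖derivCoeff (derivCoeff c) n‖) {z : ℂ} (hz : z ∈ ball (0 : ℂ) 1) :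
    ‖deriv (deriv fun w => ∑' n, c n * w ^ n) z‖ ≤ ∑' n, ‖derivCoeff (derivCoeff c) n‖ := by
  have hc₁ : Summable fun n => ‖derivCoeff c (n + 1)‖ :=
    hc.of_nonneg_of_le (fun _ => norm_nonneg _) (norm_derivCoeff_succ_le c)
  rw [deriv_deriv_tsum_mul_pow ((summable_nat_add_iff 1).mp hc₁) hc hz]
  exact norm_tsum_mul_pow_le hc (mem_ball_zero_iff.1 hz).le

lemma weight_mul_norm_eq (c : ℕ → ℂ) (n : ℕ) :
    (((n + 2) * (2 * (n + 2) - 1) : ℝ)) * ‖c (n + 2)‖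
      = ‖derivCoeff c (n + 1)‖ + 2 * ‖derivCoeff (derivCoeff c) n‖ := by
  rw [norm_derivCoeff, norm_derivCoeff, norm_derivCoeff]
  push_cast
  ring

theorem uniformlyConvexOnDisk_of_tsum_le {A B : ℕ → ℂ} (hA1 : A 1 = 1)
    (hs : Summable fun n : ℕ => (((n + 2) * (2 * (n + 2) - 1) : ℝ))
      * (‖A (n + 2)‖ + ‖B (n + 2)‖))
    (hle : ∑' n : ℕ, (((n + 2) * (2 * (n + 2) - 1) : ℝ))
      * (‖A (n + 2)‖ + ‖B (n + 2)‖) ≤ 1 - ‖B 1‖) :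
    UniformlyConvexOnDisk (fun z => ∑' n, A n * z ^ n) (fun z => ∑' n, B n * z ^ n) := by
  have hweight (n : ℕ) : (((n + 2) * (2 * (n + 2) - 1) : ℝ)) * (‖A (n + 2)‖ + ‖B (n + 2)‖)
      = ‖derivCoeff A (n + 1)‖ + 2 * ‖derivCoeff (derivCoeff A) n‖
        + (‖derivCoeff B (n + 1)‖ + 2 * ‖derivCoeff (derivCoeff B) n‖) := by
    rw [mul_add, weight_mul_norm_eq, weight_mul_norm_eq]
  simp only [hweight] at hs hle
  have hA₂ : Summable fun n => ‖derivCoeff (derivCoeff A) n‖ :=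
    hs.of_nonneg_of_le (fun _ => norm_nonneg _) fun n => by
      linarith [norm_nonneg (derivCoeff A (n + 1)), norm_nonneg (derivCoeff B (n + 1)),
        norm_nonneg (derivCoeff (derivCoeff A) n), norm_nonneg (derivCoeff (derivCoeff B) n)]
  have hB₂ : Summable fun n => ‖derivCoeff (derivCoeff B) n‖ :=
    hs.of_nonneg_of_le (fun _ => norm_nonneg _) fun n => by
      linarith [norm_nonneg (derivCoeff A (n + 1)), norm_nonneg (derivCoeff B (n + 1)),
        norm_nonneg (derivCoeff (derivCoeff A) n), norm_nonneg (derivCoeff (derivCoeff B) n)]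
  have hA₁ : Summable fun n => ‖derivCoeff A (n + 1)‖ :=
    hA₂.of_nonneg_of_le (fun _ => norm_nonneg _) (norm_derivCoeff_succ_le A)
  have hB₁ : Summable fun n => ‖derivCoeff B (n + 1)‖ :=
    hB₂.of_nonneg_of_le (fun _ => norm_nonneg _) (norm_derivCoeff_succ_le B)
  rw [(hA₁.add (hA₂.mul_left 2)).tsum_add (hB₁.add (hB₂.mul_left 2)),
    hA₁.tsum_add (hA₂.mul_left 2), hB₁.tsum_add (hB₂.mul_left 2), tsum_mul_left,
    tsum_mul_left] at hle
  intro z hz ζ hζ _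
  have hw : ‖z - ζ‖ ≤ 2 := (norm_sub_le z ζ).trans
    (by linarith [mem_ball_zero_iff.1 hz, mem_ball_zero_iff.1 hζ])
  have hH₁ : 1 - ∑' n, ‖derivCoeff A (n + 1)‖ ≤ ‖deriv (fun w => ∑' n, A n * w ^ n) z‖ := by
    have h := norm_deriv_tsum_mul_pow_sub_le hA₂ hz
    rw [hA1] at h
    linarith [norm_le_norm_add_norm_sub (deriv (fun w => ∑' n, A n * w ^ n) z) 1, norm_one (α := ℂ)]
  have hG₁ : ‖deriv (fun w => ∑' n, B n * w ^ n) z‖ ≤ ‖B 1‖ + ∑' n, ‖derivCoeff B (n + 1)‖ := by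
    linarith [norm_deriv_tsum_mul_pow_sub_le hB₂ hz,
      norm_le_norm_add_norm_sub' (deriv (fun w => ∑' n, B n * w ^ n) z) (B 1)]
  refine re_convexity_quotient_nonneg hw ?_
  linarith [norm_deriv_deriv_tsum_mul_pow_le hA₂ hz, norm_deriv_deriv_tsum_mul_pow_le hB₂ hz]

section Bernardi

variable {a b : ℝ}

lemma bernCoeff_one (ha : -1 < a) (hb : -1 < b) (c : ℕ → ℂ) : bernCoeff a b c 1 = c 1 := by
  have : (a + 1) * (b + 1) ≠ 0 := by nlinarith
  simp [bernCoeff, this]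

lemma norm_bernCoeff_add_two (ha : -1 < a) (hb : -1 < b) (c : ℕ → ℂ) (n : ℕ) :
    ‖bernCoeff a b c (n + 2)‖
      = (a + 1) * (b + 1) / ((a + (n + 2)) * (b + (n + 2))) * ‖c (n + 2)‖ := by
  have hn : (0 : ℝ) ≤ n := n.cast_nonneg
  have hfac : 0 ≤ (a + 1) * (b + 1) / ((a + (n + 2)) * (b + (n + 2))) :=
    div_nonneg (by nlinarith) (by nlinarith)
  rw [bernCoeff, norm_mul, Complex.norm_real, Real.norm_eq_abs]
  push_cast
  rw [abs_of_nonneg hfac]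

lemma two_mul_sub_one_mul_le (ha : -1 < a) (hb : -1 < b)
    (hab : a * b ≤ 3 ∨ (3 < a * b ∧ a ^ 2 * b ^ 2 - 4 * (a * b) - 2 * (a + b) ≤ 1))
    {x : ℝ} (hx : 2 ≤ x) : (2 * x - 1) * ((a + 1) * (b + 1)) ≤ 2 * ((a + x) * (b + x)) := by
  rcases hab with hab | ⟨-, hab⟩
  · nlinarith [mul_nonneg (by linarith : (0 : ℝ) ≤ x - 2) (by linarith : (0 : ℝ) ≤ x + 1 - a * b)]
  · nlinarith [sq_nonneg (2 * x - (a * b + 1))]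

lemma weight_mul_norm_bernCoeff_le (ha : -1 < a) (hb : -1 < b)
    (hab : a * b ≤ 3 ∨ (3 < a * b ∧ a ^ 2 * b ^ 2 - 4 * (a * b) - 2 * (a + b) ≤ 1))
    (c : ℕ → ℂ) (n : ℕ) :
    (((n + 2) * (2 * (n + 2) - 1) : ℝ)) * ‖bernCoeff a b c (n + 2)‖
      ≤ 2 * ((n + 2 : ℝ) * ‖c (n + 2)‖) := by
  have hn : (0 : ℝ) ≤ n := n.cast_nonneg
  have hden : 0 < (a + (n + 2)) * (b + (n + 2)) := by nlinarith
  have hfac := two_mul_sub_one_mul_le ha hb hab (x := n + 2) (by linarith)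
  rw [norm_bernCoeff_add_two ha hb, ← mul_assoc, ← mul_assoc, mul_comm 2]
  refine mul_le_mul_of_nonneg_right ?_ (norm_nonneg _)
  rw [mul_div_assoc', div_le_iff₀ hden]
  nlinarith

end Bernardi

theorem bernardi_uniformly_convex_general (a b : ℝ) (ha : -1 < a) (hb : -1 < b)
    (hab : a * b ≤ 3 ∨ (3 < a * b ∧ a ^ 2 * b ^ 2 - 4 * (a * b) - 2 * (a + b) ≤ 1))
    (ca cb : ℕ → ℂ) (hca1 : ca 1 = 1)
    (hsa : Summable (fun n : ℕ => ((n + 2 : ℝ)) * ‖ca (n + 2)‖))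
    (hsb : Summable (fun n : ℕ => ((n + 1 : ℝ)) * ‖cb (n + 1)‖))
    (hcoef : (∑' n : ℕ, ((n + 2 : ℝ)) * ‖ca (n + 2)‖)
        + (∑' n : ℕ, ((n + 1 : ℝ)) * ‖cb (n + 1)‖) ≤ 1 / 2) :
    Summable (fun n : ℕ => (((n + 2) * (2 * (n + 2) - 1) : ℝ))
        * (‖bernCoeff a b ca (n + 2)‖ + ‖bernCoeff a b cb (n + 2)‖)) ∧
    (∑' n : ℕ, (((n + 2) * (2 * (n + 2) - 1) : ℝ))
        * (‖bernCoeff a b ca (n + 2)‖ + ‖bernCoeff a b cb (n + 2)‖))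
      ≤ 1 - ‖bernCoeff a b cb 1‖ ∧
    UniformlyConvexOnDisk (fun z => ∑' n : ℕ, bernCoeff a b ca n * z ^ n)
      (fun z => ∑' n : ℕ, bernCoeff a b cb n * z ^ n) := by
  have hsb₂ : Summable fun n : ℕ => (n + 2 : ℝ) * ‖cb (n + 2)‖ :=
    ((summable_nat_add_iff 1).mpr hsb).congr fun n => by push_cast; ring
  have hmaj := (hsa.mul_left 2).add (hsb₂.mul_left 2)
  have hterm (n : ℕ) : (((n + 2) * (2 * (n + 2) - 1) : ℝ))
      * (‖bernCoeff a b ca (n + 2)‖ + ‖bernCoeff a b cb (n + 2)‖)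
      ≤ 2 * ((n + 2 : ℝ) * ‖ca (n + 2)‖) + 2 * ((n + 2 : ℝ) * ‖cb (n + 2)‖) := by
    rw [mul_add]
    exact add_le_add (weight_mul_norm_bernCoeff_le ha hb hab ca n)
      (weight_mul_norm_bernCoeff_le ha hb hab cb n)
  have hs : Summable fun n : ℕ => (((n + 2) * (2 * (n + 2) - 1) : ℝ))
      * (‖bernCoeff a b ca (n + 2)‖ + ‖bernCoeff a b cb (n + 2)‖) :=
    hmaj.of_nonneg_of_le (fun n => mul_nonneg (by nlinarith [n.cast_nonneg (α := ℝ)])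
      (by positivity)) hterm
  have hcb : ∑' n : ℕ, (n + 1 : ℝ) * ‖cb (n + 1)‖
      = ‖cb 1‖ + ∑' n : ℕ, (n + 2 : ℝ) * ‖cb (n + 2)‖ := by
    rw [hsb.tsum_eq_zero_add]
    push_cast
    ring_nf
  have hle : ∑' n : ℕ, (((n + 2) * (2 * (n + 2) - 1) : ℝ))
      * (‖bernCoeff a b ca (n + 2)‖ + ‖bernCoeff a b cb (n + 2)‖) ≤ 1 - ‖bernCoeff a b cb 1‖ :=
    calc _ ≤ _ := hs.tsum_le_tsum hterm hmaj
      _ = 2 * ∑' n : ℕ, (n + 2 : ℝ) * ‖ca (n + 2)‖ + 2 * ∑' n : ℕ, (n + 2 : ℝ) * ‖cb (n + 2)‖ := by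
        rw [(hsa.mul_left 2).tsum_add (hsb₂.mul_left 2), tsum_mul_left, tsum_mul_left]
      _ ≤ 1 - ‖cb 1‖ := by linarith [norm_nonneg (cb 1)]
      _ = 1 - ‖bernCoeff a b cb 1‖ := by rw [bernCoeff_one ha hb]
  exact ⟨hs, hle, uniformlyConvexOnDisk_of_tsum_le ((bernCoeff_one ha hb ca).trans hca1) hs hle⟩

/-- If the coefficients of `f = h + conj g` satisfy
`∑_{n≥2} n|aₙ| + ∑_{n≥1} n|bₙ| ≤ 1/2` and `a > -1`, `b > -1` satisfy (i) `ab ≤ 3` or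
(ii) `ab > 3` and `a²b² - 4ab - 2(a+b) ≤ 1`, then the Bernardi-transformed coefficients
`Aₙ, Bₙ` satisfy `∑_{n≥2} n(2n-1)(|Aₙ|+|Bₙ|) ≤ 1 - |B₁|`; consequently
`F = ∑ Aₙ zⁿ + conj (∑ Bₙ zⁿ)` is uniformly convex in `𝔻`. -/
theorem bernardi_uniformly_convex (a b : ℝ) (ha : -1 < a) (hb : -1 < b)
    (hab : a * b ≤ 3 ∨ (3 < a * b ∧ a ^ 2 * b ^ 2 - 4 * (a * b) - 2 * (a + b) ≤ 1))
    (ca cb : ℕ → ℂ) (hca0 : ca 0 = 0) (hca1 : ca 1 = 1) (hcb0 : cb 0 = 0)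
    (hsa : Summable (fun n : ℕ => ((n + 2 : ℝ)) * ‖ca (n + 2)‖))
    (hsb : Summable (fun n : ℕ => ((n + 1 : ℝ)) * ‖cb (n + 1)‖))
    (hcoef : (∑' n : ℕ, ((n + 2 : ℝ)) * ‖ca (n + 2)‖)
        + (∑' n : ℕ, ((n + 1 : ℝ)) * ‖cb (n + 1)‖) ≤ 1 / 2) :
    Summable (fun n : ℕ => (((n + 2) * (2 * (n + 2) - 1) : ℝ))
        * (‖bernCoeff a b ca (n + 2)‖ + ‖bernCoeff a b cb (n + 2)‖)) ∧
    (∑' n : ℕ, (((n + 2) * (2 * (n + 2) - 1) : ℝ))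
        * (‖bernCoeff a b ca (n + 2)‖ + ‖bernCoeff a b cb (n + 2)‖))
      ≤ 1 - ‖bernCoeff a b cb 1‖ ∧
    UniformlyConvexOnDisk (fun z => ∑' n : ℕ, bernCoeff a b ca n * z ^ n)
      (fun z => ∑' n : ℕ, bernCoeff a b cb n * z ^ n) :=
  bernardi_uniformly_convex_general a b ha hb hab ca cb hca1 hsa hsb hcoef
end
end

section
/- Let a > -1 and b > -1 be real numbers satisfying either (i) ab \leq 3, or (ii) ab > 3 and a^2 b^2 - 4ab - 2(a+b) \leq 1. Then for every integer n \geq 2, \varphi(n) := 2n^2 - 2(1+ab)n + (3ab + a + b + 1) \geq 0. -/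
/-- If `a > -1`, `b > -1` and either (i) `ab ≤ 3`, or (ii) `ab > 3`
and `a²b² - 4ab - 2(a+b) ≤ 1`, then for every integer `n ≥ 2`,
`φ(n) = 2n² - 2(1+ab)n + (3ab + a + b + 1) ≥ 0`. -/
theorem phi_nonneg (a b : ℝ) (ha : -1 < a) (hb : -1 < b)
    (hab : a * b ≤ 3 ∨ (3 < a * b ∧ a ^ 2 * b ^ 2 - 4 * (a * b) - 2 * (a + b) ≤ 1)) :
    ∀ n : ℕ, 2 ≤ n →
      0 ≤ 2 * (n : ℝ) ^ 2 - 2 * (1 + a * b) * (n : ℝ) + (3 * (a * b) + a + b + 1) := by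
  intro n hn
  have hn2 : (2:ℝ) ≤ (n:ℝ) := by exact_mod_cast hn
  rcases hab with h | ⟨h1, h2⟩
  · nlinarith [mul_nonneg (by linarith : (0:ℝ) ≤ (n:ℝ) - 2)
      (by linarith : (0:ℝ) ≤ (n:ℝ) + 1 - a * b)]
  · nlinarith [sq_nonneg (2 * (n:ℝ) - (1 + a * b))]
end

section
/- Let a be a real number with -1 < a \leq (3\sqrt{2} - \sqrt{5})/(\sqrt{5} - \sqrt{2}). Then for every integer n \geq 2, (a+1)^2 (2n-1) \leq 2(a+n)^2. Moreover, the function \psi(n) = (\sqrt{2}\,n - \sqrt{2n-1})/(\sqrt{2n-1} - \sqrt{2}) attains its minimum over integers n \geq 2 at n = 3, with \min_{n \geq 2} \psi(n) = \psi(3) = (3\sqrt{2} - \sqrt{5})/(\sqrt{5} - \sqrt{2}). -/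
noncomputable section

/-- `ψ(n) = (√2 n - √(2n-1)) / (√(2n-1) - √2)`. -/
def psi (n : ℕ) : ℝ :=
  (Real.sqrt 2 * n - Real.sqrt (2 * n - 1)) / (Real.sqrt (2 * n - 1) - Real.sqrt 2)

lemma c_eq : (3 * Real.sqrt 2 - Real.sqrt 5) / (Real.sqrt 5 - Real.sqrt 2)
    = (2 * Real.sqrt 10 + 1) / 3 := by
  have h2 : Real.sqrt 2 ^ 2 = 2 := Real.sq_sqrt (by norm_num)
  have h5 : Real.sqrt 5 ^ 2 = 5 := Real.sq_sqrt (by norm_num)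
  have h10 : Real.sqrt 2 * Real.sqrt 5 = Real.sqrt 10 := by
    rw [← Real.sqrt_mul (by norm_num : (0:ℝ) ≤ 2) 5]; norm_num
  have hlt : Real.sqrt 2 < Real.sqrt 5 := by
    apply Real.sqrt_lt_sqrt <;> norm_num
  rw [div_eq_div_iff (by linarith) (by norm_num), ← h10]
  nlinarith [h2, h5, Real.sqrt_nonneg 2, Real.sqrt_nonneg 5]

/-- key quadratic inequality at the critical value `c = (2√10+1)/3`. -/
lemma key (n : ℕ) (hn : 2 ≤ n) :
    ((2 * Real.sqrt 10 + 1) / 3 + 1) ^ 2 * (2 * (n : ℝ) - 1)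
      ≤ 2 * ((2 * Real.sqrt 10 + 1) / 3 + (n : ℝ)) ^ 2 := by
  set t := Real.sqrt 10 with ht
  have ht2 : t ^ 2 = 10 := Real.sq_sqrt (by norm_num)
  have ht0 : 0 ≤ t := Real.sqrt_nonneg 10
  have ht3 : 3 < t := by nlinarith
  have ht4 : t < 13 / 4 := by nlinarith
  rcases le_or_gt (n : ℝ) 3 with h | h
  · have h2 : (2 : ℝ) ≤ n := by exact_mod_cast hn
    nlinarith [mul_nonneg (by linarith : (0:ℝ) ≤ 3 - (n:ℝ))
      (by linarith : (0:ℝ) ≤ 23 + 4 * t - 9 * (n:ℝ))]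
  · have h4 : (4 : ℝ) ≤ n := by
      have : 4 ≤ n := by exact_mod_cast Nat.lt_iff_add_one_le.mp (by exact_mod_cast h)
      exact_mod_cast this
    nlinarith [mul_nonneg (by linarith : (0:ℝ) ≤ (n:ℝ) - 3)
      (by linarith : (0:ℝ) ≤ 9 * (n:ℝ) - 23 - 4 * t)]

/-- If `-1 < a ≤ (3√2 - √5)/(√5 - √2)`, then
`(a+1)²(2n-1) ≤ 2(a+n)²` for every integer `n ≥ 2`.  Moreover
`ψ(n) = (√2 n - √(2n-1))/(√(2n-1) - √2)` attains its minimum over integers `n ≥ 2` at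
`n = 3`, with `ψ(3) = (3√2 - √5)/(√5 - √2)`. -/
theorem psi_min_and_coeff_ineq (a : ℝ) (ha : -1 < a)
    (ha' : a ≤ (3 * Real.sqrt 2 - Real.sqrt 5) / (Real.sqrt 5 - Real.sqrt 2)) :
    (∀ n : ℕ, 2 ≤ n →
        (a + 1) ^ 2 * (2 * (n : ℝ) - 1) ≤ 2 * (a + (n : ℝ)) ^ 2) ∧
    (∀ n : ℕ, 2 ≤ n → psi 3 ≤ psi n) ∧
    psi 3 = (3 * Real.sqrt 2 - Real.sqrt 5) / (Real.sqrt 5 - Real.sqrt 2) := by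
  set c := (2 * Real.sqrt 10 + 1) / 3 with hcdef
  have hc : (3 * Real.sqrt 2 - Real.sqrt 5) / (Real.sqrt 5 - Real.sqrt 2) = c := c_eq
  rw [hc] at ha'
  have ht0 : 0 ≤ Real.sqrt 10 := Real.sqrt_nonneg 10
  have ht2 : Real.sqrt 10 ^ 2 = 10 := Real.sq_sqrt (by norm_num)
  have ht3 : 3 < Real.sqrt 10 := by nlinarith
  have hc1 : (1 : ℝ) < c := by rw [hcdef]; nlinarith
  have hkey : ∀ n : ℕ, 2 ≤ n →
      (c + 1) ^ 2 * (2 * (n : ℝ) - 1) ≤ 2 * (c + (n : ℝ)) ^ 2 := key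
  clear_value c
  have part3 : psi 3 = (3 * Real.sqrt 2 - Real.sqrt 5) / (Real.sqrt 5 - Real.sqrt 2) := by
    unfold psi
    norm_num
    ring_nf
  refine ⟨?_, ?_, part3⟩
  · intro n hn
    have hn2 : (2 : ℝ) ≤ n := by exact_mod_cast hn
    have hk := hkey n hn
    have hid : (2 * (a + (n:ℝ)) ^ 2 - (a + 1) ^ 2 * (2 * (n:ℝ) - 1)) * (c + 1)
        = (c - a) * (2 * ((n:ℝ) - 1) ^ 2)
          + (a + 1) * (2 * (c + (n:ℝ)) ^ 2 - (c + 1) ^ 2 * (2 * (n:ℝ) - 1))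
          + (2 * (n:ℝ) - 3) * ((c - a) * ((a + 1) * (c + 1))) := by ring
    have h1 : 0 ≤ (c - a) * (2 * ((n:ℝ) - 1) ^ 2) :=
      mul_nonneg (by linarith) (by positivity)
    have h2 : 0 ≤ (a + 1) * (2 * (c + (n:ℝ)) ^ 2 - (c + 1) ^ 2 * (2 * (n:ℝ) - 1)) :=
      mul_nonneg (by linarith) (by linarith)
    have h3 : 0 ≤ (2 * (n:ℝ) - 3) * ((c - a) * ((a + 1) * (c + 1))) :=
      mul_nonneg (by linarith) (mul_nonneg (by linarith)
        (mul_nonneg (by linarith) (by linarith)))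
    have hsum : 0 ≤ (2 * (a + (n:ℝ)) ^ 2 - (a + 1) ^ 2 * (2 * (n:ℝ) - 1)) * (c + 1) := by
      rw [hid]; linarith
    nlinarith [hsum, hc1]
  · intro n hn
    rw [part3, hc]
    have hn2 : (2 : ℝ) ≤ n := by exact_mod_cast hn
    have hr0 : (3 : ℝ) ≤ 2 * (n:ℝ) - 1 := by linarith
    set r := Real.sqrt (2 * (n:ℝ) - 1) with hrdef
    have hr2 : r ^ 2 = 2 * (n:ℝ) - 1 := Real.sq_sqrt (by linarith)
    have hrpos : 0 ≤ r := Real.sqrt_nonneg _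
    have hs2 : Real.sqrt 2 ^ 2 = 2 := Real.sq_sqrt (by norm_num)
    have hs2pos : 0 ≤ Real.sqrt 2 := Real.sqrt_nonneg 2
    have hrs : Real.sqrt 2 < r := by
      rw [hrdef]; apply Real.sqrt_lt_sqrt <;> norm_num <;> linarith
    have hk := hkey n hn
    -- (c+1) r ≤ √2 (c+n)
    have hsq : ((c + 1) * r) ^ 2 ≤ (Real.sqrt 2 * (c + (n:ℝ))) ^ 2 := by
      have : ((c+1)*r)^2 = (c+1)^2 * (2*(n:ℝ)-1) := by rw [mul_pow, hr2]
      have h2 : (Real.sqrt 2 * (c + (n:ℝ)))^2 = 2 * (c + (n:ℝ))^2 := by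
        rw [mul_pow, hs2]
      rw [this, h2]; exact hk
    have hle : (c + 1) * r ≤ Real.sqrt 2 * (c + (n:ℝ)) := by
      have h1 : 0 ≤ (c + 1) * r := by positivity
      have h2 : 0 ≤ Real.sqrt 2 * (c + (n:ℝ)) := by
        apply mul_nonneg hs2pos; linarith
      nlinarith
    unfold psi
    rw [← hrdef, le_div_iff₀ (by linarith)]
    linarith [hle]
end
end

section
/- Let H(z) = z + \sum_{n=2}^{\infty} A_n z^n and G(z) = \sum_{n=2}^{\infty} B_n z^n be holomorphic on \mathbb{D} (so G'(0) = 0) with \sum_{n=2}^{\infty} n(2n-1)(|A_n| + |B_n|) \leq 1, and let a \geq 1. Define h_a(z) = (a H(z) + z H'(z))/(a+1) and g_a(z) = (a G(z) + z G'(z))/(a+1), whose Taylor coefficients are a'_n = \frac{a+n}{a+1} A_n and b'_n = \frac{a+n}{a+1} B_n. Then \sum_{n=2}^{\infty} n|a'_n| + \sum_{n=1}^{\infty} n|b'_n| \leq 1/2; consequently the harmonic function f_a = h_a + \overline{g_a} is uniformly starlike in \mathbb{D}. -/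
open Complex Metric ComplexConjugate

noncomputable section

/-- The analytic condition (due to Kanas–Ponnusamy–Sairam) characterizing uniform
starlikeness used in the paper: `f = h + conj g` satisfies `f(0) = 0`, has positive
Jacobian, `Re {(f(z)-f(ζ)) / ((z-ζ) f_z(z) - conj(z-ζ) f_{z̄}(z))} ≥ 0` for `z ≠ ζ`
in `𝔻`, with strict inequality when `ζ = 0`.  We use it as our formal definition of
"uniformly starlike in `𝔻`". -/
def UniformlyStarlikeOnDisk (h g : ℂ → ℂ) : Prop :=
  (h 0 + conj (g 0) = 0) ∧
  (∀ z ∈ ball (0:ℂ) 1, ‖deriv g z‖ < ‖deriv h z‖) ∧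
  (∀ z ∈ ball (0:ℂ) 1, ∀ ζ ∈ ball (0:ℂ) 1, z ≠ ζ →
    0 ≤ (((h z + conj (g z)) - (h ζ + conj (g ζ)))
        / ((z - ζ) * deriv h z - conj (z - ζ) * conj (deriv g z))).re) ∧
  (∀ z ∈ ball (0:ℂ) 1, z ≠ 0 →
    0 < ((h z + conj (g z))
        / (z * deriv h z - conj z * conj (deriv g z))).re)

/-! With `w = z - ζ`, the numerator `N` and the denominator `D` of the starlikeness quotient
satisfy `N ∓ D = (h z - h ζ ∓ w h'(z)) + conj (g z - g ζ ± w g'(z))`, in which the linear terms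
cancel, except for `2w` in `N + D`. For `|z|, |ζ| ≤ r < 1` the power `zⁿ` (`n ≥ 2`) contributes at
most `2 n rⁿ⁻¹ |w| ≤ 2 n r |w|`, so `∑_{n≥2} n (|cₙ| + |dₙ|) ≤ 1/2` gives
`|N - D| ≤ r |w| < (2 - r) |w| ≤ |N + D|`, i.e. `Re (N / D) > 0`. The coefficients
`(a + n)/(a + 1) Aₙ` of `h_a` obey this bound since `n (a + n)/(a + 1) ≤ n (2n - 1)/2`
for `n ≥ 2` and `a ≥ 1`. -/

namespace HarmonicStarlike

variable {e : ℕ → ℂ}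

lemma norm_pow_sub_pow_le {z ζ : ℂ} {r : ℝ} (hz : ‖z‖ ≤ r) (hζ : ‖ζ‖ ≤ r) (n : ℕ) :
    ‖z ^ n - ζ ^ n‖ ≤ n * r ^ (n - 1) * ‖z - ζ‖ := by
  refine (convex_closedBall (0 : ℂ) r).norm_image_sub_le_of_norm_hasDerivWithin_le
    (f := fun w => w ^ n) (fun w _ => (hasDerivAt_pow n w).hasDerivWithinAt) (fun w hw => ?_)
    (mem_closedBall_zero_iff.2 hζ) (mem_closedBall_zero_iff.2 hz)
  rw [norm_mul, norm_pow, norm_natCast]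
  gcongr
  exact mem_closedBall_zero_iff.1 hw

lemma norm_pow_sub_pow_add_mul_le {z ζ s : ℂ} {r : ℝ} (hz : ‖z‖ ≤ r) (hζ : ‖ζ‖ ≤ r)
    (hs : ‖s‖ ≤ ‖z - ζ‖) (n : ℕ) :
    ‖z ^ n - ζ ^ n + s * (n * z ^ (n - 1))‖ ≤ 2 * n * r ^ (n - 1) * ‖z - ζ‖ := by
  have hdiff := norm_pow_sub_pow_le hz hζ n
  have hr : 0 ≤ r := (norm_nonneg z).trans hz
  have hlin : ‖s * (n * z ^ (n - 1))‖ ≤ n * r ^ (n - 1) * ‖z - ζ‖ := by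
    rw [norm_mul, norm_mul, norm_natCast, norm_pow, mul_comm]
    gcongr
  linarith [norm_add_le (z ^ n - ζ ^ n) (s * (n * z ^ (n - 1)))]

lemma norm_mul_nat_mul_pow_le {z : ℂ} (hz : ‖z‖ ≤ 1) (n : ℕ) :
    ‖e n * (n * z ^ (n - 1))‖ ≤ n * ‖e n‖ := by
  calc ‖e n * (n * z ^ (n - 1))‖ = n * ‖e n‖ * ‖z‖ ^ (n - 1) := by
        rw [norm_mul, norm_mul, norm_natCast, norm_pow]; ring
    _ ≤ n * ‖e n‖ := mul_le_of_le_one_right (by positivity) (pow_le_one₀ (norm_nonneg z) hz)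

lemma summable_nat_mul_norm_of_shift (he : Summable fun n : ℕ => ((n : ℝ) + 2) * ‖e (n + 2)‖) :
    Summable fun n : ℕ => (n : ℝ) * ‖e n‖ :=
  (summable_nat_add_iff 2).mp (by simpa only [Nat.cast_add, Nat.cast_ofNat] using he)

lemma summable_norm_of_summable_nat_mul_norm (he : Summable fun n : ℕ => (n : ℝ) * ‖e n‖) :
    Summable fun n => ‖e n‖ :=
  (summable_nat_add_iff 1).mp <| ((summable_nat_add_iff 1).mpr he).of_nonneg_of_le
    (fun _ => norm_nonneg _) fun n => le_mul_of_one_le_left (norm_nonneg _) (by simp)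

lemma hasSum_mul_pow (he : Summable fun n => ‖e n‖) {z : ℂ} (hz : ‖z‖ ≤ 1) :
    HasSum (fun n => e n * z ^ n) (∑' n, e n * z ^ n) :=
  (Summable.of_norm_bounded he fun n => by
    rw [norm_mul, norm_pow]
    exact mul_le_of_le_one_right (norm_nonneg _) (pow_le_one₀ (norm_nonneg z) hz)).hasSum

lemma hasSum_mul_nat_mul_pow (he : Summable fun n : ℕ => (n : ℝ) * ‖e n‖) {z : ℂ}
    (hz : ‖z‖ ≤ 1) :
    HasSum (fun n => e n * (n * z ^ (n - 1))) (∑' n, e n * (n * z ^ (n - 1))) :=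
  (Summable.of_norm_bounded he (norm_mul_nat_mul_pow_le hz)).hasSum

lemma hasDerivAt_tsum_mul_pow (he : Summable fun n : ℕ => (n : ℝ) * ‖e n‖) {z : ℂ}
    (hz : ‖z‖ < 1) :
    HasDerivAt (fun w => ∑' n, e n * w ^ n) (∑' n, e n * (n * z ^ (n - 1))) z :=
  hasDerivAt_tsum_of_isPreconnected he isOpen_ball (convex_ball (0 : ℂ) 1).isPreconnected
    (fun n w _ => (hasDerivAt_pow n w).const_mul (e n))
    (fun n _ hw => norm_mul_nat_mul_pow_le (mem_ball_zero_iff.1 hw).le n)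
    (mem_ball_zero_iff.2 hz)
    (hasSum_mul_pow (summable_norm_of_summable_nat_mul_norm he) hz.le).summable
    (mem_ball_zero_iff.2 hz)

lemma tsum_mul_zero_pow (e : ℕ → ℂ) : ∑' n, e n * (0 : ℂ) ^ n = e 0 := by
  rw [tsum_eq_single 0 fun n hn => by simp [hn], pow_zero, mul_one]

lemma _root_.HasSum.norm_sub_apply_one_le {f : ℕ → ℂ} {a : ℂ} (hf : HasSum f a) (h0 : f 0 = 0)
    {g : ℕ → ℝ} {b : ℝ} (hg : HasSum g b) (hfg : ∀ n, ‖f (n + 2)‖ ≤ g n) : ‖a - f 1‖ ≤ b := by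
  have htail := (hasSum_nat_add_iff' 2).mpr hf
  simp only [Finset.sum_range_succ, Finset.sum_range_zero, h0, zero_add] at htail
  exact htail.norm_le_of_bounded hg hfg

lemma norm_tsum_sub_tsum_add_mul_deriv_sub_le
    (he : Summable fun n : ℕ => ((n : ℝ) + 2) * ‖e (n + 2)‖) {z ζ s : ℂ} {r : ℝ}
    (hz : ‖z‖ ≤ r) (hζ : ‖ζ‖ ≤ r) (hr : r < 1) (hs : ‖s‖ ≤ ‖z - ζ‖) :
    ‖(∑' n, e n * z ^ n) - (∑' n, e n * ζ ^ n) + s * deriv (fun w => ∑' n, e n * w ^ n) z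
        - e 1 * (z - ζ + s)‖
      ≤ 2 * r * ‖z - ζ‖ * ∑' n : ℕ, ((n : ℝ) + 2) * ‖e (n + 2)‖ := by
  have he₁ := summable_nat_mul_norm_of_shift he
  have he₀ := summable_norm_of_summable_nat_mul_norm he₁
  have hr₀ : 0 ≤ r := (norm_nonneg z).trans hz
  rw [(hasDerivAt_tsum_mul_pow he₁ (hz.trans_lt hr)).deriv]
  have hsum := ((hasSum_mul_pow he₀ (hz.trans hr.le)).sub (hasSum_mul_pow he₀ (hζ.trans hr.le))).add
    ((hasSum_mul_nat_mul_pow he₁ (hz.trans hr.le)).mul_left s)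
  have hterm : ∀ n : ℕ, ‖e (n + 2) * z ^ (n + 2) - e (n + 2) * ζ ^ (n + 2)
      + s * (e (n + 2) * ((n + 2 : ℕ) * z ^ (n + 2 - 1)))‖
      ≤ 2 * r * ‖z - ζ‖ * (((n : ℝ) + 2) * ‖e (n + 2)‖) := fun n =>
    calc _ = ‖e (n + 2)‖ * ‖z ^ (n + 2) - ζ ^ (n + 2) + s * ((n + 2 : ℕ) * z ^ (n + 2 - 1))‖ := by
          rw [← norm_mul]; ring_nf
      _ ≤ ‖e (n + 2)‖ * (2 * (n + 2 : ℕ) * r ^ (n + 1) * ‖z - ζ‖) := by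
          gcongr; exact norm_pow_sub_pow_add_mul_le hz hζ hs (n + 2)
      _ ≤ ‖e (n + 2)‖ * (2 * (n + 2 : ℕ) * r * ‖z - ζ‖) := by
          gcongr; exact pow_le_of_le_one hr₀ hr.le n.succ_ne_zero
      _ = _ := by push_cast; ring
  convert hsum.norm_sub_apply_one_le (by simp) (he.hasSum.mul_left (2 * r * ‖z - ζ‖)) hterm
    using 3
  simp only [pow_one, Nat.cast_one, one_mul, pow_zero, Nat.sub_self]
  ring

lemma norm_deriv_tsum_sub_le (he : Summable fun n : ℕ => ((n : ℝ) + 2) * ‖e (n + 2)‖) {z : ℂ}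
    (hz : ‖z‖ < 1) :
    ‖deriv (fun w => ∑' n, e n * w ^ n) z - e 1‖ ≤ ∑' n : ℕ, ((n : ℝ) + 2) * ‖e (n + 2)‖ := by
  have he₁ := summable_nat_mul_norm_of_shift he
  rw [(hasDerivAt_tsum_mul_pow he₁ hz).deriv]
  simpa using (hasSum_mul_nat_mul_pow he₁ hz.le).norm_sub_apply_one_le (by simp) he.hasSum
    fun n => by simpa using norm_mul_nat_mul_pow_le hz.le (n + 2)

lemma re_div_pos_of_norm_sub_lt_norm_add {N D : ℂ} (h : ‖N - D‖ < ‖N + D‖) : 0 < (N / D).re := by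
  have hD : D ≠ 0 := by
    rintro rfl
    simp at h
  have hsq : normSq (N - D) < normSq (N + D) := by
    rw [normSq_eq_norm_sq, normSq_eq_norm_sq]
    gcongr
  have hre : 0 < N.re * D.re + N.im * D.im := by
    rw [normSq_add, normSq_sub] at hsq
    simp only [mul_re, conj_re, conj_im] at hsq
    linarith
  rw [div_re, ← add_div]
  exact div_pos hre (normSq_pos.2 hD)

variable {c d : ℕ → ℂ}

lemma re_div_pos_of_sum_coeff_le (hc1 : c 1 = 1) (hd1 : d 1 = 0)
    (hc : Summable fun n : ℕ => ((n : ℝ) + 2) * ‖c (n + 2)‖)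
    (hd : Summable fun n : ℕ => ((n : ℝ) + 2) * ‖d (n + 2)‖)
    (hle : (∑' n : ℕ, ((n : ℝ) + 2) * ‖c (n + 2)‖) + (∑' n : ℕ, ((n : ℝ) + 2) * ‖d (n + 2)‖)
      ≤ 1 / 2)
    {z ζ : ℂ} (hz : ‖z‖ < 1) (hζ : ‖ζ‖ < 1) (hne : z ≠ ζ) :
    let h := fun z => ∑' n, c n * z ^ n
    let g := fun z => ∑' n, d n * z ^ n
    0 < (((h z + conj (g z)) - (h ζ + conj (g ζ)))
      / ((z - ζ) * deriv h z - conj (z - ζ) * conj (deriv g z))).re := by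
  intro h g
  set Sc := ∑' n : ℕ, ((n : ℝ) + 2) * ‖c (n + 2)‖
  set Sd := ∑' n : ℕ, ((n : ℝ) + 2) * ‖d (n + 2)‖
  set r := max ‖z‖ ‖ζ‖
  have hr : r < 1 := max_lt hz hζ
  have hzr : ‖z‖ ≤ r := le_max_left _ _
  have hζr : ‖ζ‖ ≤ r := le_max_right _ _
  have hw : 0 < ‖z - ζ‖ := norm_pos_iff.2 (sub_ne_zero.2 hne)
  have hS : 2 * r * ‖z - ζ‖ * Sc + 2 * r * ‖z - ζ‖ * Sd ≤ r * ‖z - ζ‖ := by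
    have : 0 ≤ r * ‖z - ζ‖ := by positivity
    nlinarith
  have hcm : ‖h z - h ζ - (z - ζ) * deriv h z‖ ≤ 2 * r * ‖z - ζ‖ * Sc := by
    convert norm_tsum_sub_tsum_add_mul_deriv_sub_le hc hzr hζr hr (norm_neg (z - ζ)).le using 2
    rw [hc1]; ring
  have hcp : ‖h z - h ζ + (z - ζ) * deriv h z - 2 * (z - ζ)‖ ≤ 2 * r * ‖z - ζ‖ * Sc := by
    convert norm_tsum_sub_tsum_add_mul_deriv_sub_le hc hzr hζr hr le_rfl using 2
    rw [hc1]; ring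
  have hdm : ‖g z - g ζ - (z - ζ) * deriv g z‖ ≤ 2 * r * ‖z - ζ‖ * Sd := by
    convert norm_tsum_sub_tsum_add_mul_deriv_sub_le hd hzr hζr hr (norm_neg (z - ζ)).le using 2
    rw [hd1]; ring
  have hdp : ‖g z - g ζ + (z - ζ) * deriv g z‖ ≤ 2 * r * ‖z - ζ‖ * Sd := by
    convert norm_tsum_sub_tsum_add_mul_deriv_sub_le hd hzr hζr hr le_rfl using 2
    rw [hd1]; ring
  set Xm := h z - h ζ - (z - ζ) * deriv h z
  set Xp := h z - h ζ + (z - ζ) * deriv h z - 2 * (z - ζ)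
  set Ym := g z - g ζ - (z - ζ) * deriv g z
  set Yp := g z - g ζ + (z - ζ) * deriv g z
  have hsub := norm_add_le Xm (conj Yp)
  have hadd := norm_add_le Xp (conj Ym)
  have htwo := norm_sub_le (2 * (z - ζ) + (Xp + conj Ym)) (Xp + conj Ym)
  rw [RCLike.norm_conj] at hsub hadd
  rw [add_sub_cancel_right, norm_mul, Complex.norm_ofNat] at htwo
  apply re_div_pos_of_norm_sub_lt_norm_add
  calc _ = ‖Xm + conj Yp‖ := by congr 1; simp only [Xm, Yp, map_add, map_sub, map_mul]; ring
    _ < ‖2 * (z - ζ) + (Xp + conj Ym)‖ := by nlinarith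
    _ = _ := by congr 1; simp only [Xp, Ym, map_sub, map_mul]; ring

theorem uniformlyStarlikeOnDisk_tsum_of_sum_coeff_le (hc0 : c 0 = 0) (hc1 : c 1 = 1)
    (hd0 : d 0 = 0) (hd1 : d 1 = 0)
    (hc : Summable fun n : ℕ => ((n : ℝ) + 2) * ‖c (n + 2)‖)
    (hd : Summable fun n : ℕ => ((n : ℝ) + 2) * ‖d (n + 2)‖)
    (hle : (∑' n : ℕ, ((n : ℝ) + 2) * ‖c (n + 2)‖) + (∑' n : ℕ, ((n : ℝ) + 2) * ‖d (n + 2)‖)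
      ≤ 1 / 2) :
    UniformlyStarlikeOnDisk (fun z => ∑' n, c n * z ^ n) (fun z => ∑' n, d n * z ^ n) := by
  have hstar {z ζ : ℂ} := re_div_pos_of_sum_coeff_le (z := z) (ζ := ζ) hc1 hd1 hc hd hle
  refine ⟨by simp [tsum_mul_zero_pow, hc0, hd0], fun z hz => ?_,
    fun z hz ζ hζ hne => (hstar (mem_ball_zero_iff.1 hz) (mem_ball_zero_iff.1 hζ) hne).le,
    fun z hz hz0 => ?_⟩
  · rw [mem_ball_zero_iff] at hz
    have hSc : 0 ≤ ∑' n : ℕ, ((n : ℝ) + 2) * ‖c (n + 2)‖ := tsum_nonneg fun n => by positivity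
    have hh := norm_deriv_tsum_sub_le hc hz
    have hg := norm_deriv_tsum_sub_le hd hz
    rw [hc1] at hh
    rw [hd1, sub_zero] at hg
    have := norm_sub_norm_le 1 (deriv (fun w => ∑' n, c n * w ^ n) z)
    rw [norm_sub_rev, norm_one] at this
    linarith
  · simpa [tsum_mul_zero_pow, hc0, hd0] using hstar (mem_ball_zero_iff.1 hz) (by simp) hz0

theorem _root_.UniformlyStarlikeOnDisk.congr {h g h' g' : ℂ → ℂ}
    (H : UniformlyStarlikeOnDisk h' g') (hh : Set.EqOn h h' (ball 0 1))
    (hg : Set.EqOn g g' (ball 0 1)) : UniformlyStarlikeOnDisk h g := by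
  have hdh : Set.EqOn (deriv h) (deriv h') (ball 0 1) := fun z hz =>
    (hh.eventuallyEq_of_mem (isOpen_ball.mem_nhds hz)).deriv_eq
  have hdg : Set.EqOn (deriv g) (deriv g') (ball 0 1) := fun z hz =>
    (hg.eventuallyEq_of_mem (isOpen_ball.mem_nhds hz)).deriv_eq
  have h0 : (0 : ℂ) ∈ ball (0 : ℂ) 1 := mem_ball_self one_pos
  obtain ⟨H0, Hjac, Hstar, Hstar0⟩ := H
  refine ⟨by rw [hh h0, hg h0]; exact H0, fun z hz => ?_, fun z hz ζ hζ hne => ?_,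
    fun z hz hz0 => ?_⟩
  · rw [hdh hz, hdg hz]; exact Hjac z hz
  · rw [hh hz, hh hζ, hg hz, hg hζ, hdh hz, hdg hz]; exact Hstar z hz ζ hζ hne
  · rw [hh hz, hg hz, hdh hz, hdg hz]; exact Hstar0 z hz hz0

def bernardiInvCoeff (a : ℝ) (X : ℕ → ℂ) (n : ℕ) : ℂ := (((a + n) / (a + 1) : ℝ) : ℂ) * X n

lemma bernardiInv_eq_tsum (a : ℝ) {X : ℕ → ℂ} (hX : Summable fun n : ℕ => (n : ℝ) * ‖X n‖)
    {z : ℂ} (hz : ‖z‖ < 1) :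
    ((a : ℂ) * (∑' n, X n * z ^ n) + z * deriv (fun w => ∑' n, X n * w ^ n) z) / ((a : ℂ) + 1)
      = ∑' n, bernardiInvCoeff a X n * z ^ n := by
  rw [(hasDerivAt_tsum_mul_pow hX hz).deriv]
  have hterm : ∀ n, ((a : ℂ) * (X n * z ^ n) + z * (X n * (n * z ^ (n - 1)))) / ((a : ℂ) + 1)
      = bernardiInvCoeff a X n * z ^ n := by
    rintro (_ | n)
    · simp only [bernardiInvCoeff, CharP.cast_eq_zero, zero_mul, mul_zero, add_zero, pow_zero,
        mul_one, ofReal_div, ofReal_add, ofReal_one]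
      ring
    · simp only [bernardiInvCoeff, Nat.add_sub_cancel]
      push_cast
      ring
  simp_rw [← hterm]
  exact ((((hasSum_mul_pow (summable_norm_of_summable_nat_mul_norm hX) hz.le).mul_left (a : ℂ)).add
    ((hasSum_mul_nat_mul_pow hX hz.le).mul_left z)).div_const ((a : ℂ) + 1)).tsum_eq.symm

lemma add_div_add_one_le {a x : ℝ} (ha : 1 ≤ a) (hx : 2 ≤ x) :
    (a + x) / (a + 1) ≤ (2 * x - 1) / 2 := by
  rw [div_le_div_iff₀ (by linarith) two_pos]
  nlinarith

lemma nat_add_two_mul_norm_bernardiInvCoeff_le {a : ℝ} (ha : 1 ≤ a) (X : ℕ → ℂ) (n : ℕ) :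
    ((n : ℝ) + 2) * ‖bernardiInvCoeff a X (n + 2)‖
      ≤ 1 / 2 * (((n : ℝ) + 2) * (2 * ((n : ℝ) + 2) - 1) * ‖X (n + 2)‖) := by
  rw [bernardiInvCoeff, norm_mul, norm_real, Real.norm_of_nonneg (by positivity)]
  push_cast
  calc ((n : ℝ) + 2) * ((a + (n + 2)) / (a + 1) * ‖X (n + 2)‖)
      = ((n : ℝ) + 2) * ((a + (n + 2)) / (a + 1)) * ‖X (n + 2)‖ := by ring
    _ ≤ ((n : ℝ) + 2) * ((2 * ((n : ℝ) + 2) - 1) / 2) * ‖X (n + 2)‖ := by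
        gcongr _ * ?_ * _
        exact add_div_add_one_le ha (le_add_of_nonneg_left n.cast_nonneg)
    _ = _ := by ring

lemma bernardiInvCoeff_one {a : ℝ} (ha : a + 1 ≠ 0) (X : ℕ → ℂ) : bernardiInvCoeff a X 1 = X 1 := by
  rw [bernardiInvCoeff, Nat.cast_one, div_self ha, ofReal_one, one_mul]

lemma summable_nat_mul_norm_of_weighted {X Y : ℕ → ℂ}
    (hsum : Summable fun n : ℕ =>
      ((n : ℝ) + 2) * (2 * ((n : ℝ) + 2) - 1) * (‖X (n + 2)‖ + ‖Y (n + 2)‖)) :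
    (Summable fun n : ℕ => (n : ℝ) * ‖X n‖) ∧ Summable fun n : ℕ => (n : ℝ) * ‖Y n‖ := by
  have hn : ∀ n : ℕ, (0 : ℝ) ≤ n := fun n => n.cast_nonneg
  constructor <;>
  · refine summable_nat_mul_norm_of_shift (hsum.of_nonneg_of_le (fun n => by positivity)
      fun n => ?_)
    nlinarith [hn n, norm_nonneg (X (n + 2)), norm_nonneg (Y (n + 2)),
      mul_nonneg (hn n) (norm_nonneg (X (n + 2))), mul_nonneg (hn n) (norm_nonneg (Y (n + 2)))]

lemma bernardiInvCoeff_summable_and_sum_le {a : ℝ} (ha : 1 ≤ a) {X Y : ℕ → ℂ}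
    (hsum : Summable fun n : ℕ =>
      ((n : ℝ) + 2) * (2 * ((n : ℝ) + 2) - 1) * (‖X (n + 2)‖ + ‖Y (n + 2)‖))
    (hcoef : (∑' n : ℕ,
      ((n : ℝ) + 2) * (2 * ((n : ℝ) + 2) - 1) * (‖X (n + 2)‖ + ‖Y (n + 2)‖)) ≤ 1) :
    (Summable fun n : ℕ => ((n : ℝ) + 2) * ‖bernardiInvCoeff a X (n + 2)‖) ∧
    (Summable fun n : ℕ => ((n : ℝ) + 2) * ‖bernardiInvCoeff a Y (n + 2)‖) ∧
    (∑' n : ℕ, ((n : ℝ) + 2) * ‖bernardiInvCoeff a X (n + 2)‖)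
      + (∑' n : ℕ, ((n : ℝ) + 2) * ‖bernardiInvCoeff a Y (n + 2)‖) ≤ 1 / 2 := by
  have hpt : ∀ n : ℕ, ((n : ℝ) + 2) * ‖bernardiInvCoeff a X (n + 2)‖
      + ((n : ℝ) + 2) * ‖bernardiInvCoeff a Y (n + 2)‖
      ≤ 1 / 2 * (((n : ℝ) + 2) * (2 * ((n : ℝ) + 2) - 1) * (‖X (n + 2)‖ + ‖Y (n + 2)‖)) :=
    fun n => by
      linarith [nat_add_two_mul_norm_bernardiInvCoeff_le ha X n,
        nat_add_two_mul_norm_bernardiInvCoeff_le ha Y n]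
  have hX : Summable fun n : ℕ => ((n : ℝ) + 2) * ‖bernardiInvCoeff a X (n + 2)‖ :=
    (hsum.mul_left (1 / 2)).of_nonneg_of_le (fun n => by positivity) fun n => by
      linarith [hpt n, (by positivity : 0 ≤ ((n : ℝ) + 2) * ‖bernardiInvCoeff a Y (n + 2)‖)]
  have hY : Summable fun n : ℕ => ((n : ℝ) + 2) * ‖bernardiInvCoeff a Y (n + 2)‖ :=
    (hsum.mul_left (1 / 2)).of_nonneg_of_le (fun n => by positivity) fun n => by
      linarith [hpt n, (by positivity : 0 ≤ ((n : ℝ) + 2) * ‖bernardiInvCoeff a X (n + 2)‖)]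
  refine ⟨hX, hY, ?_⟩
  rw [← hX.tsum_add hY]
  calc _ ≤ _ := (hX.add hY).tsum_le_tsum hpt (hsum.mul_left (1 / 2))
    _ ≤ 1 / 2 := by rw [tsum_mul_left]; linarith

lemma summable_and_tsum_nat_add_one_eq {g : ℕ → ℝ} (h1 : g 1 = 0)
    (hg : Summable fun n => g (n + 2)) :
    (Summable fun n => g (n + 1)) ∧ ∑' n, g (n + 1) = ∑' n, g (n + 2) := by
  have hs : Summable fun n => g (n + 1) := (summable_nat_add_iff 1).mp hg
  exact ⟨hs, by rw [hs.tsum_eq_zero_add, zero_add, h1, zero_add]⟩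

end HarmonicStarlike

open HarmonicStarlike

/-- If `H(z) = z + ∑_{n≥2} Aₙ zⁿ`, `G(z) = ∑_{n≥2} Bₙ zⁿ` satisfy
`∑_{n≥2} n(2n-1)(|Aₙ|+|Bₙ|) ≤ 1` and `a ≥ 1`, then the coefficients
`a'ₙ = ((a+n)/(a+1)) Aₙ`, `b'ₙ = ((a+n)/(a+1)) Bₙ` of
`h_a = (aH + zH')/(a+1)`, `g_a = (aG + zG')/(a+1)` satisfy
`∑_{n≥2} n|a'ₙ| + ∑_{n≥1} n|b'ₙ| ≤ 1/2`; consequently `f_a = h_a + conj g_a` is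
uniformly starlike in `𝔻`. -/
theorem bernardi_inverse_uniformly_starlike (a : ℝ) (ha : 1 ≤ a)
    (A B : ℕ → ℂ) (hA0 : A 0 = 0) (hA1 : A 1 = 1) (hB0 : B 0 = 0) (hB1 : B 1 = 0)
    (hsum : Summable (fun n : ℕ => (((n + 2) * (2 * (n + 2) - 1) : ℝ))
        * (‖A (n + 2)‖ + ‖B (n + 2)‖)))
    (hcoef : (∑' n : ℕ, (((n + 2) * (2 * (n + 2) - 1) : ℝ))
        * (‖A (n + 2)‖ + ‖B (n + 2)‖)) ≤ 1) :
    (Summable fun n : ℕ =>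
      ((n + 2 : ℝ)) * ‖(((a + (n + 2)) / (a + 1) : ℝ) : ℂ) * A (n + 2)‖) ∧
    (Summable fun n : ℕ =>
      ((n + 1 : ℝ)) * ‖(((a + (n + 1)) / (a + 1) : ℝ) : ℂ) * B (n + 1)‖) ∧
    (∑' n : ℕ, ((n + 2 : ℝ)) * ‖(((a + (n + 2)) / (a + 1) : ℝ) : ℂ) * A (n + 2)‖)
      + (∑' n : ℕ, ((n + 1 : ℝ)) * ‖(((a + (n + 1)) / (a + 1) : ℝ) : ℂ) * B (n + 1)‖)
      ≤ 1 / 2 ∧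
    UniformlyStarlikeOnDisk
      (fun z => ((a : ℂ) * (∑' n : ℕ, A n * z ^ n)
        + z * deriv (fun w => ∑' n : ℕ, A n * w ^ n) z) / ((a : ℂ) + 1))
      (fun z => ((a : ℂ) * (∑' n : ℕ, B n * z ^ n)
        + z * deriv (fun w => ∑' n : ℕ, B n * w ^ n) z) / ((a : ℂ) + 1)) := by
  obtain ⟨hA, hB⟩ := summable_nat_mul_norm_of_weighted hsum
  obtain ⟨hcA, hcB, hle⟩ := bernardiInvCoeff_summable_and_sum_le ha hsum hcoef
  obtain ⟨hsB, htB⟩ := summable_and_tsum_nat_add_one_eq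
    (g := fun k : ℕ => (k : ℝ) * ‖bernardiInvCoeff a B k‖) (by simp [bernardiInvCoeff, hB1])
    (by exact_mod_cast hcB)
  have ha₁ : a + 1 ≠ 0 := by linarith
  push_cast at htB
  refine ⟨by exact_mod_cast hcA, by exact_mod_cast hsB, by exact_mod_cast htB ▸ hle, ?_⟩
  refine (uniformlyStarlikeOnDisk_tsum_of_sum_coeff_le (by simp [bernardiInvCoeff, hA0])
    (by rw [bernardiInvCoeff_one ha₁, hA1]) (by simp [bernardiInvCoeff, hB0])
    (by rw [bernardiInvCoeff_one ha₁, hB1]) hcA hcB hle).congr ?_ ?_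
  · exact fun z hz => bernardiInv_eq_tsum a hA (mem_ball_zero_iff.1 hz)
  · exact fun z hz => bernardiInv_eq_tsum a hB (mem_ball_zero_iff.1 hz)
end
end
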